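/- arXiv:1304.0650 — 4 statements merged into one kernel-verified Lean document; each statement's English description precedes it below -/
import Mathlib

section
/- Let n ≥ 9 be an integer, q ∈ (0,1), t ∈ ℝ, and let δ_1, …, δ_{⌊√n⌋} be real numbers with |δ_j| ≤ 4j/(3(n−j)) for each j = 1, …, ⌊√n⌋. Then each 1 + δ_j > 0 and |2 ∑_{j=1}^{⌊√n⌋} δ_j cos(jt) / ((q^j + q^{−j})(1 + δ_j))| < (8/(3n − 7√n)) · q/(1−q)². -/
/-!
Each term is bounded separately: `1 / (q^j + q^(-j)) ≤ q^j`, and `|δ| ≤ a / b` with `a < b` gives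
`|δ| / (1 + δ) ≤ |δ| / (1 - |δ|) ≤ a / (b - a)`; for `a = 4j`, `b = 3(n - j)` this is
`4j / (3n - 7j) ≤ 4j / (3n - 7√n)` because `j ≤ √n`. What remains is `∑ j q^j < q / (1 - q)^2`.
-/

open Real Finset

lemma one_add_pos_of_abs_le_div {δ a b : ℝ} (ha : 0 ≤ a) (hab : a < b) (h : |δ| ≤ a / b) :
    0 < 1 + δ := by
  have : a / b < 1 := (div_lt_one (ha.trans_lt hab)).2 hab
  linarith [neg_abs_le δ]

lemma abs_div_one_add_le_of_abs_le_div {δ a b : ℝ} (ha : 0 ≤ a) (hab : a < b)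
    (h : |δ| ≤ a / b) : |δ| / (1 + δ) ≤ a / (b - a) := by
  have hb : 0 < b := ha.trans_lt hab
  have hδb : |δ| * b ≤ a := (le_div_iff₀ hb).1 h
  rw [div_le_div_iff₀ (one_add_pos_of_abs_le_div ha hab h) (sub_pos.2 hab)]
  nlinarith [neg_abs_le δ, abs_nonneg δ]

lemma inv_add_inv_self_le {x : ℝ} (hx : 0 < x) : (x + x⁻¹)⁻¹ ≤ x := by
  simpa using inv_anti₀ (inv_pos.2 hx) (le_add_of_nonneg_left hx.le)

lemma abs_mul_cos_div_rpow_add_rpow_neg_le {q δ θ a : ℝ} (j : ℕ) (hq : 0 < q)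
    (hδ : 0 < 1 + δ) (ha : |δ| / (1 + δ) ≤ a) :
    |δ * cos θ / ((q ^ (j : ℝ) + q ^ (-(j : ℝ))) * (1 + δ))| ≤ a * q ^ j := by
  have hqj : 0 < q ^ j := pow_pos hq j
  rw [rpow_neg hq.le, rpow_natCast, abs_div, abs_mul, abs_of_pos (mul_pos (by positivity) hδ)]
  calc |δ| * |cos θ| / ((q ^ j + (q ^ j)⁻¹) * (1 + δ))
      ≤ |δ| / ((q ^ j + (q ^ j)⁻¹) * (1 + δ)) := by
        gcongr
        exact mul_le_of_le_one_right (abs_nonneg δ) (abs_cos_le_one θ)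
    _ = |δ| / (1 + δ) * (q ^ j + (q ^ j)⁻¹)⁻¹ := by
        rw [mul_comm, ← div_div, div_eq_mul_inv]
    _ ≤ a * q ^ j := by
        gcongr
        · exact (div_nonneg (abs_nonneg δ) hδ.le).trans ha
        · exact inv_add_inv_self_le hqj

lemma sum_natCast_mul_geometric_lt {q : ℝ} (hq : 0 < q) (hq1 : q < 1) (s : Finset ℕ) :
    ∑ j ∈ s, (j : ℝ) * q ^ j < q / (1 - q) ^ 2 := by
  set i := s.sup id + 1
  have hi : i ∉ s := fun h => (le_sup (f := id) h).not_gt (Nat.lt_succ_self _)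
  calc ∑ j ∈ s, (j : ℝ) * q ^ j < ∑ j ∈ insert i s, (j : ℝ) * q ^ j := by
        rw [sum_insert hi]
        have : 0 < (i : ℝ) * q ^ i := by positivity
        linarith
    _ ≤ q / (1 - q) ^ 2 :=
        sum_le_hasSum _ (fun j _ => by positivity)
          (hasSum_coe_mul_geometric_of_norm_lt_one (by rwa [norm_of_nonneg hq.le]))

lemma three_mul_sub_seven_mul_sqrt_pos {n : ℕ} (hn : 9 ≤ n) : 0 < 3 * (n : ℝ) - 7 * √n := by
  have hn' : (9 : ℝ) ≤ n := by exact_mod_cast hn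
  have hsq : √n * √n = (n : ℝ) := mul_self_sqrt (by positivity)
  nlinarith [sqrt_nonneg (n : ℝ)]

theorem gamma4_type_bound (n : ℕ) (hn : 9 ≤ n) (q : ℝ) (hq : 0 < q) (hq1 : q < 1)
    (t : ℝ) (δ : ℕ → ℝ)
    (hδ : ∀ j ∈ Finset.Icc 1 (Nat.sqrt n), |δ j| ≤ 4 * j / (3 * ((n : ℝ) - j))) :
    (∀ j ∈ Finset.Icc 1 (Nat.sqrt n), 0 < 1 + δ j) ∧
    |2 * ∑ j ∈ Finset.Icc 1 (Nat.sqrt n),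
        δ j * Real.cos (j * t) / ((q ^ (j : ℝ) + q ^ (-(j : ℝ))) * (1 + δ j))| <
      8 / (3 * (n : ℝ) - 7 * Real.sqrt n) * (q / (1 - q) ^ 2) := by
  set d := 3 * (n : ℝ) - 7 * √n
  have hd : 0 < d := three_mul_sub_seven_mul_sqrt_pos hn
  have hj_le : ∀ j ∈ Icc 1 (Nat.sqrt n), (j : ℝ) ≤ √n := fun j hj =>
    (Nat.cast_le.2 (mem_Icc.1 hj).2).trans nat_sqrt_le_real_sqrt
  have hj_lt : ∀ j ∈ Icc 1 (Nat.sqrt n), 4 * (j : ℝ) < 3 * ((n : ℝ) - j) := fun j hj => by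
    linarith [hj_le j hj]
  have hpos : ∀ j ∈ Icc 1 (Nat.sqrt n), 0 < 1 + δ j := fun j hj =>
    one_add_pos_of_abs_le_div (by positivity) (hj_lt j hj) (hδ j hj)
  refine ⟨hpos, ?_⟩
  have hterm : ∀ j ∈ Icc 1 (Nat.sqrt n),
      |δ j * cos (j * t) / ((q ^ (j : ℝ) + q ^ (-(j : ℝ))) * (1 + δ j))| ≤ 4 * j / d * q ^ j :=
    fun j hj => abs_mul_cos_div_rpow_add_rpow_neg_le j hq (hpos j hj) <|
      (abs_div_one_add_le_of_abs_le_div (by positivity) (hj_lt j hj) (hδ j hj)).trans <|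
        div_le_div_of_nonneg_left (by positivity) hd (by linarith [hj_le j hj])
  calc |2 * ∑ j ∈ Icc 1 (Nat.sqrt n),
        δ j * cos (j * t) / ((q ^ (j : ℝ) + q ^ (-(j : ℝ))) * (1 + δ j))|
      ≤ 2 * ∑ j ∈ Icc 1 (Nat.sqrt n), 4 * j / d * q ^ j := by
        rw [abs_mul, abs_two]
        gcongr
        exact (abs_sum_le_sum_abs _ _).trans (sum_le_sum hterm)
    _ = 8 / d * ∑ j ∈ Icc 1 (Nat.sqrt n), (j : ℝ) * q ^ j := by
        rw [mul_sum, mul_sum]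
        refine sum_congr rfl fun j _ => ?_
        ring
    _ < 8 / d * (q / (1 - q) ^ 2) := by
        gcongr
        exact sum_natCast_mul_geometric_lt hq hq1 _
end

section
/- For every q ∈ (0, 91/250] and every integer n ≥ 9: q^{n−√n}/(1 − q^{2n}) < 7/(37 n²); equivalently, q^n/(1 − q^{2n}) < (7/(37 n²)) q^{√n}. -/
open Real

lemma aux_pow_bound : ∀ n : ℕ, 9 ≤ n →
    (51/100:ℝ)^n * (37 * (n:ℝ)^2) < 7 * (262143/262144) := by
  intro n hn
  induction n with
  | zero => omega
  | succ m ih =>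
    rcases Nat.lt_or_ge m 9 with h | h
    · have hm : m = 8 := by omega
      subst hm
      norm_num
    · have ihm := ih h
      have hm9 : (9:ℝ) ≤ m := by exact_mod_cast h
      have hpos : (0:ℝ) < (51/100:ℝ)^m := by positivity
      have hsq : 81 * ((m:ℝ)+1)^2 ≤ 100 * (m:ℝ)^2 := by nlinarith
      have hstep : (51/100:ℝ)^(m+1) * (37 * ((m:ℝ)+1)^2)
          ≤ (51/100:ℝ)^m * (37 * (m:ℝ)^2) * (51/81) := by
        rw [pow_succ]
        nlinarith
      push_cast
      nlinarith

theorem small_q_tail_bound (q : ℝ) (hq : 0 < q) (hq' : q ≤ 91 / 250)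
    (n : ℕ) (hn : 9 ≤ n) :
    q ^ ((n : ℝ) - Real.sqrt n) / (1 - q ^ (2 * n)) < 7 / (37 * (n : ℝ) ^ 2) ∧
    q ^ n / (1 - q ^ (2 * n)) < 7 / (37 * (n : ℝ) ^ 2) * q ^ Real.sqrt n := by
  have hn9 : (9:ℝ) ≤ (n:ℝ) := by exact_mod_cast hn
  have hnpos : (0:ℝ) < (n:ℝ) := by linarith
  have hs0 : 0 ≤ Real.sqrt n := Real.sqrt_nonneg _
  have hs : Real.sqrt n ≤ (n:ℝ)/3 := by
    have h1 : Real.sqrt n ≤ Real.sqrt (((n:ℝ)/3)^2) := Real.sqrt_le_sqrt (by nlinarith)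
    rwa [Real.sqrt_sq (by linarith)] at h1
  have hexp : 2*(n:ℝ)/3 ≤ (n:ℝ) - Real.sqrt n := by linarith
  -- numerator bound
  have hA1 : q ^ ((n:ℝ) - Real.sqrt n) ≤ (91/250:ℝ) ^ ((n:ℝ) - Real.sqrt n) :=
    Real.rpow_le_rpow hq.le hq' (by linarith)
  have hA2 : (91/250:ℝ) ^ ((n:ℝ) - Real.sqrt n) ≤ (91/250:ℝ) ^ (2*(n:ℝ)/3) :=
    Real.rpow_le_rpow_of_exponent_ge (by norm_num) (by norm_num) hexp
  have hbase : (91/250:ℝ) ^ ((2:ℝ)/3) ≤ 51/100 := by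
    have h3 : ((91/250:ℝ) ^ ((2:ℝ)/3))^(3:ℕ) ≤ (51/100:ℝ)^(3:ℕ) := by
      rw [← Real.rpow_natCast ((91/250:ℝ) ^ ((2:ℝ)/3)) 3, ← Real.rpow_mul (by norm_num)]
      have : (2:ℝ)/3 * (3:ℕ) = 2 := by push_cast; ring
      rw [this]
      rw [show ((91:ℝ)/250) ^ (2:ℝ) = ((91:ℝ)/250) ^ (2:ℕ) by
        rw [← Real.rpow_natCast]; norm_num]
      norm_num
    exact le_of_pow_le_pow_left₀ (by norm_num) (by norm_num) h3
  have hA3 : (91/250:ℝ) ^ (2*(n:ℝ)/3) ≤ (51/100:ℝ)^n := by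
    have e1 : (91/250:ℝ) ^ (2*(n:ℝ)/3) = ((91/250:ℝ) ^ ((2:ℝ)/3)) ^ ((n:ℝ)) := by
      rw [show 2*(n:ℝ)/3 = (2:ℝ)/3 * (n:ℝ) by ring, Real.rpow_mul (by norm_num)]
    rw [e1, ← Real.rpow_natCast (51/100:ℝ) n]
    exact Real.rpow_le_rpow (Real.rpow_nonneg (by norm_num) _) hbase (by positivity)
  have hA : q ^ ((n:ℝ) - Real.sqrt n) ≤ (51/100:ℝ)^n := le_trans hA1 (le_trans hA2 hA3)
  -- denominator bound
  have hD : q^(2*n) ≤ (1/2:ℝ)^18 := by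
    calc q^(2*n) ≤ (1/2:ℝ)^(2*n) := by
          apply pow_le_pow_left₀ hq.le; linarith
      _ ≤ (1/2:ℝ)^18 := by
          apply pow_le_pow_of_le_one (by norm_num) (by norm_num); omega
  have hDc : (262143/262144:ℝ) ≤ 1 - q^(2*n) := by
    norm_num at hD ⊢; linarith
  have hDpos : (0:ℝ) < 1 - q^(2*n) := by linarith [hDc]
  have key := aux_pow_bound n hn
  have hfrac : q ^ ((n:ℝ) - Real.sqrt n) / (1 - q ^ (2*n)) < 7 / (37*(n:ℝ)^2) := by
    have h1 : q ^ ((n:ℝ) - Real.sqrt n) / (1 - q ^ (2*n)) ≤ (51/100:ℝ)^n / (262143/262144) :=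
      div_le_div₀ (by positivity) hA (by norm_num) hDc
    have h2 : (51/100:ℝ)^n / (262143/262144) < 7 / (37*(n:ℝ)^2) := by
      rw [div_lt_div_iff₀ (by norm_num) (by positivity)]
      nlinarith [key]
    linarith
  refine ⟨hfrac, ?_⟩
  have hsq : 0 < q ^ Real.sqrt n := Real.rpow_pos_of_pos hq _
  have hq_eq : (q:ℝ)^n = q ^ ((n:ℝ) - Real.sqrt n) * q ^ Real.sqrt n := by
    rw [← Real.rpow_natCast q n, ← Real.rpow_add hq]
    ring_nf
  rw [hq_eq]
  calc q ^ ((n:ℝ) - Real.sqrt n) * q ^ Real.sqrt n / (1 - q ^ (2*n))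
      = q ^ ((n:ℝ) - Real.sqrt n) / (1 - q ^ (2*n)) * q ^ Real.sqrt n := by ring
    _ < 7 / (37*(n:ℝ)^2) * q ^ Real.sqrt n := by
        exact mul_lt_mul_of_pos_right hfrac hsq
end

section
/- For every q ∈ (0,1): (9(1+q)/(4(1−q)))² > (9/(2 ln(1/q)))^{125/79}. -/
open Real

lemma aux_exp_pos (x : ℝ) (hx : 0 < x) : 0 < (x - 2) * Real.exp x + x + 2 := by
  have key : StrictMonoOn (fun y : ℝ => (y - 2) * Real.exp y + y + 2) (Set.Ici 0) := by
    apply strictMonoOn_of_deriv_pos (convex_Ici 0)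
    · fun_prop
    · intro y hy
      rw [interior_Ici, Set.mem_Ioi] at hy
      have hd : HasDerivAt (fun y : ℝ => (y - 2) * Real.exp y + y + 2)
          (1 * Real.exp y + (y - 2) * Real.exp y + 1) y := by
        simpa using ((((hasDerivAt_id y).sub_const 2).mul (Real.hasDerivAt_exp y)).add
          (hasDerivAt_id y)).add_const 2
      rw [hd.deriv]
      have h1 : -y + 1 < Real.exp (-y) := Real.add_one_lt_exp (by linarith)
      have h2 : (0:ℝ) < Real.exp y := Real.exp_pos y
      have h3 : Real.exp (-y) * Real.exp y = 1 := by
        rw [← Real.exp_add]; simp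
      nlinarith [mul_lt_mul_of_pos_right h1 h2]
  have h0 : (fun y : ℝ => (y - 2) * Real.exp y + y + 2) 0 = 0 := by
    simp [Real.exp_zero]
  have := key (Set.self_mem_Ici) (Set.mem_Ici.mpr hx.le) hx
  rw [h0] at this
  exact this

lemma log_bound (q : ℝ) (hq : 0 < q) (hq1 : q < 1) :
    2 * (1 - q) / (1 + q) < Real.log (1 / q) := by
  set x := Real.log (1 / q) with hxdef
  have hx : 0 < x := Real.log_pos (by rw [lt_div_iff₀ hq]; linarith)
  have hex : Real.exp x = 1 / q := Real.exp_log (by positivity)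
  have hA := aux_exp_pos x hx
  rw [hex] at hA
  have hq' : q * (1 / q) = 1 := by field_simp
  have hA' : 0 < (x - 2) + (x + 2) * q := by nlinarith [mul_pos hA hq]
  rw [div_lt_iff₀ (by linarith : (0:ℝ) < 1 + q)]
  nlinarith

theorem square_gt_rpow (q : ℝ) (hq : 0 < q) (hq1 : q < 1) :
    (9 * (1 + q) / (4 * (1 - q))) ^ 2 >
      (9 / (2 * Real.log (1 / q))) ^ ((125 : ℝ) / 79) := by
  have h1q : 0 < 1 - q := by linarith
  have hL : 0 < Real.log (1 / q) := Real.log_pos (by rw [lt_div_iff₀ hq]; linarith)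
  have hB := log_bound q hq hq1
  have hBB : 2 * (1 - q) < Real.log (1 / q) * (1 + q) := by
    rw [div_lt_iff₀ (by linarith : (0:ℝ) < 1 + q)] at hB; linarith
  have htpos : 0 < 9 / (2 * Real.log (1 / q)) := by positivity
  have hA : 9 / (2 * Real.log (1 / q)) < 9 * (1 + q) / (4 * (1 - q)) := by
    rw [div_lt_div_iff₀ (by positivity) (by positivity)]
    nlinarith
  by_cases ht : 1 < 9 / (2 * Real.log (1 / q))
  · have h2 : (9 / (2 * Real.log (1 / q))) ^ ((125 : ℝ) / 79) <
        (9 / (2 * Real.log (1 / q))) ^ ((2 : ℝ)) :=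
      Real.rpow_lt_rpow_of_exponent_lt ht (by norm_num)
    have h3 : (9 / (2 * Real.log (1 / q))) ^ ((2 : ℝ)) =
        (9 / (2 * Real.log (1 / q))) ^ (2 : ℕ) := by
      rw [← Real.rpow_natCast]; norm_num
    have h4 : (9 / (2 * Real.log (1 / q))) ^ (2 : ℕ) <
        (9 * (1 + q) / (4 * (1 - q))) ^ (2 : ℕ) :=
      pow_lt_pow_left₀ hA htpos.le (by norm_num)
    calc (9 / (2 * Real.log (1 / q))) ^ ((125 : ℝ) / 79)
        < (9 / (2 * Real.log (1 / q))) ^ ((2 : ℝ)) := h2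
      _ = (9 / (2 * Real.log (1 / q))) ^ (2 : ℕ) := h3
      _ < (9 * (1 + q) / (4 * (1 - q))) ^ (2 : ℕ) := h4
  · have hRHS : (9 / (2 * Real.log (1 / q))) ^ ((125 : ℝ) / 79) ≤ 1 :=
      Real.rpow_le_one htpos.le (le_of_not_gt ht) (by norm_num)
    have hAgt : (9 : ℝ) / 4 < 9 * (1 + q) / (4 * (1 - q)) := by
      rw [div_lt_div_iff₀ (by norm_num) (by positivity)]
      nlinarith
    have : (1 : ℝ) < (9 * (1 + q) / (4 * (1 - q))) ^ 2 := by nlinarith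
    linarith
end

section
/- Let q ∈ (0,1) and let n ≥ 9 be an integer satisfying condition (★). Then q^n/(1 − q^{2n}) ≤ 7 q^{√n}/(37 n²). -/
open Real MeasureTheory

noncomputable def poissonKernelQB (q β : ℝ) (t : ℝ) : ℝ :=
  ∑' k : ℕ, q ^ (k + 1) * Real.cos ((k + 1) * t - β * Real.pi / 2)

noncomputable def phiN (n : ℕ) (t : ℝ) : ℝ := Real.sign (Real.sin (n * t))

noncomputable def poissonConv (q β : ℝ) (φ : ℝ → ℝ) (x : ℝ) : ℝ :=
  (1 / Real.pi) * ∫ t in (-Real.pi)..Real.pi, poissonKernelQB q β (x - t) * φ t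

noncomputable def normC (g : ℝ → ℝ) : ℝ := ⨆ x : ℝ, |g x|

noncomputable def normL1 (g : ℝ → ℝ) : ℝ := ∫ t in (-Real.pi)..Real.pi, |g t|

def classCInf (q β : ℝ) : Set (ℝ → ℝ) :=
  {f | Continuous f ∧ Function.Periodic f (2 * Real.pi) ∧
    ∃ A : ℝ, ∃ φ : ℝ → ℝ, Measurable φ ∧ Function.Periodic φ (2 * Real.pi) ∧
      (∫ t in (-Real.pi)..Real.pi, φ t) = 0 ∧
      (∀ᵐ t : ℝ ∂MeasureTheory.volume, |φ t| ≤ 1) ∧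
      ∀ x, f x = A + poissonConv q β φ x}

def classC1 (q β : ℝ) : Set (ℝ → ℝ) :=
  {f | Function.Periodic f (2 * Real.pi) ∧
    ∃ A : ℝ, ∃ φ : ℝ → ℝ, IntervalIntegrable φ MeasureTheory.volume (-Real.pi) Real.pi ∧
      Function.Periodic φ (2 * Real.pi) ∧
      (∫ t in (-Real.pi)..Real.pi, φ t) = 0 ∧
      (∫ t in (-Real.pi)..Real.pi, |φ t|) ≤ 1 ∧
      ∀ x, f x = A + poissonConv q β φ x}

def starCond (q : ℝ) (n : ℕ) : Prop :=
  43 / (10 * (1 - q)) * q ^ (Real.sqrt n) +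
    q / (1 - q) ^ 2 *
      min (160 / (57 * ((n : ℝ) - Real.sqrt n))) (8 / (3 * (n : ℝ) - 7 * Real.sqrt n)) ≤
  (1 / 2 + 2 * q / ((1 + q ^ 2) * (1 - q))) * ((1 - q) / (1 + q)) ^ (4 / (1 - q ^ 2))

noncomputable def kolmogorovWidthC (M : Set (ℝ → ℝ)) (m : ℕ) : ℝ :=
  ⨅ F : {F : Submodule ℝ (ℝ → ℝ) //
      Module.rank ℝ F ≤ m ∧ ∀ u ∈ F, Continuous u ∧ Function.Periodic u (2 * Real.pi)},
    ⨆ f : ↥M, ⨅ u : ↥F.1, normC (↑f - ↑u)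

noncomputable def kolmogorovWidthL (M : Set (ℝ → ℝ)) (m : ℕ) : ℝ :=
  ⨅ F : {F : Submodule ℝ (ℝ → ℝ) //
      Module.rank ℝ F ≤ m ∧ ∀ u ∈ F,
        IntervalIntegrable u MeasureTheory.volume (-Real.pi) Real.pi ∧
        Function.Periodic u (2 * Real.pi)},
    ⨆ f : ↥M, ⨅ u : ↥F.1, normL1 (↑f - ↑u)

noncomputable def trigPolySpace (n : ℕ) : Submodule ℝ (ℝ → ℝ) :=
  Submodule.span ℝ {f : ℝ → ℝ | ∃ k : ℕ, k < n ∧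
    ((f = fun x => Real.cos (k * x)) ∨ (f = fun x => Real.sin (k * x)))}

noncomputable def bestApproxC (M : Set (ℝ → ℝ)) (n : ℕ) : ℝ :=
  ⨆ f : ↥M, ⨅ t : ↥(trigPolySpace n), normC (↑f - ↑t)

noncomputable def bestApproxL (M : Set (ℝ → ℝ)) (n : ℕ) : ℝ :=
  ⨆ f : ↥M, ⨅ t : ↥(trigPolySpace n), normL1 (↑f - ↑t)

noncomputable def nStar (q : ℝ) : ℕ := sInf {n : ℕ | 9 ≤ n ∧ starCond q n}

open Classical in
noncomputable def nqb (q β : ℝ) : ℕ :=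
  if ((∃ m : ℤ, β = m) ∧ q ≤ 1/5) ∨ ((¬ ∃ m : ℤ, β = m) ∧ q ≤ 196881/1000000) then 1
  else nStar q

/-!
Write `s = √n`, so that `q ^ n = q ^ s * (q ^ s) ^ (s - 1)` and `n ^ 2 = s ^ 4`. Dropping the
nonnegative second term of (★) and bounding its right-hand side by `(1 - q) ^ 3 / (2 (1 + q))`
gives `q ^ s ≤ b := 5 (1 - q) ^ 4 / (43 (1 + q))`; for `q < 1/4` one takes `b = q ^ 3` instead.
Since `b ≤ 1/8 < exp (-4/3)`, the geometric decay of `b ^ (s - 3)` beats the growth of `s ^ 4`,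
which leaves `q ^ n n ^ 2 ≤ 81 b ^ 2 q ^ s ≤ (7/37) (1 - q ^ 2) q ^ s`.
-/

open Real

lemma exp_four_thirds_lt_eight : exp (4 / 3) < 8 := by
  have h : exp 2 = exp 1 * exp 1 := by rw [← exp_add]; norm_num
  have := exp_le_exp.mpr (by norm_num : (4 / 3 : ℝ) ≤ 2)
  nlinarith [exp_one_lt_d9, exp_pos 1]

lemma rpow_sub_three_mul_pow_four_le {c s : ℝ} (hc0 : 0 ≤ c) (hc : c ≤ 1 / 8) (hs : 3 ≤ s) :
    c ^ (s - 3) * s ^ 4 ≤ 81 := by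
  have hlin : s ≤ 3 * exp ((s - 3) / 3) := by linarith [add_one_le_exp ((s - 3) / 3)]
  have hpow : s ^ 4 ≤ 81 * exp (4 / 3) ^ (s - 3) :=
    calc s ^ 4 ≤ (3 * exp ((s - 3) / 3)) ^ 4 := pow_le_pow_left₀ (by linarith) hlin 4
      _ = 81 * exp (4 / 3) ^ (s - 3) := by
        rw [← exp_mul, mul_pow, ← exp_nat_mul]; ring_nf
  have hce : c * exp (4 / 3) ≤ 1 := by nlinarith [exp_four_thirds_lt_eight, exp_pos (4 / 3)]
  calc c ^ (s - 3) * s ^ 4 ≤ c ^ (s - 3) * (81 * exp (4 / 3) ^ (s - 3)) := by gcongr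
    _ = 81 * (c * exp (4 / 3)) ^ (s - 3) := by rw [mul_rpow hc0 (exp_pos _).le]; ring
    _ ≤ 81 * 1 := by gcongr; exact rpow_le_one (by positivity) hce (by linarith)
    _ = 81 := mul_one 81

lemma tail_bound_of_rpow_sqrt_le {q b : ℝ} {n : ℕ} (hq : 0 < q) (hq1 : q < 1) (hn : 9 ≤ n)
    (hqb : q ^ √n ≤ b) (hb : b ≤ 1 / 8) (hb2 : 81 * b ^ 2 ≤ 7 / 37 * (1 - q ^ 2)) :
    q ^ n / (1 - q ^ (2 * n)) ≤ 7 * q ^ √n / (37 * (n : ℝ) ^ 2) := by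
  set s := √(n : ℝ)
  have hs2 : s ^ 2 = n := sq_sqrt (Nat.cast_nonneg n)
  have hs3 : 3 ≤ s := le_sqrt_of_sq_le (by exact_mod_cast hn)
  have hb0 : 0 ≤ b := (rpow_nonneg hq.le _).trans hqb
  have hsplit : q ^ n = q ^ s * (q ^ s) ^ (s - 1) := by
    rw [← rpow_natCast, ← hs2, ← rpow_mul hq.le, ← rpow_add hq]; ring_nf
  have hdecay : (q ^ s) ^ (s - 1) * s ^ 4 ≤ 81 * b ^ 2 :=
    calc (q ^ s) ^ (s - 1) * s ^ 4 ≤ b ^ (s - 1) * s ^ 4 := by gcongr; linarith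
      _ = b ^ 2 * (b ^ (s - 3) * s ^ 4) := by
        rw [show s - 1 = 2 + (s - 3) by ring, rpow_add' hb0 (by linarith)]; norm_cast; ring
      _ ≤ b ^ 2 * 81 := by gcongr; exact rpow_sub_three_mul_pow_four_le hb0 hb hs3
      _ = 81 * b ^ 2 := mul_comm _ _
  have h2n : q ^ (2 * n) ≤ q ^ 2 := pow_le_pow_of_le_one hq.le hq1.le (by omega)
  rw [div_le_div_iff₀ (by nlinarith) (by positivity)]
  calc q ^ n * (37 * (n : ℝ) ^ 2) = 37 * q ^ s * ((q ^ s) ^ (s - 1) * s ^ 4) := by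
        rw [hsplit, ← hs2]; ring
    _ ≤ 37 * q ^ s * (7 / 37 * (1 - q ^ 2)) :=
        mul_le_mul_of_nonneg_left (hdecay.trans hb2) (by positivity)
    _ ≤ 7 * q ^ s * (1 - q ^ (2 * n)) := by
        have := rpow_nonneg hq.le s
        nlinarith

lemma starCond_rhs_le {q : ℝ} (hq : 0 ≤ q) (hq1 : q < 1) :
    (1 / 2 + 2 * q / ((1 + q ^ 2) * (1 - q))) * ((1 - q) / (1 + q)) ^ (4 / (1 - q ^ 2)) ≤
      (1 - q) ^ 3 / (2 * (1 + q)) := by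
  have hq1' : 0 < 1 - q := by linarith
  have hr0 : 0 < (1 - q) / (1 + q) := by positivity
  have hpow : ((1 - q) / (1 + q)) ^ (4 / (1 - q ^ 2)) ≤ ((1 - q) / (1 + q)) ^ (4 : ℝ) :=
    rpow_le_rpow_of_exponent_ge hr0 ((div_le_one (by positivity)).mpr (by linarith))
      ((le_div_iff₀ (by nlinarith)).mpr (by nlinarith))
  have hpre : 1 / 2 + 2 * q / ((1 + q ^ 2) * (1 - q)) ≤ (1 + 3 * q) / (2 * (1 - q)) :=
    calc 1 / 2 + 2 * q / ((1 + q ^ 2) * (1 - q)) ≤ 1 / 2 + 2 * q / (1 - q) := by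
          gcongr; nlinarith
      _ = (1 + 3 * q) / (2 * (1 - q)) := by field_simp; ring
  calc (1 / 2 + 2 * q / ((1 + q ^ 2) * (1 - q))) * ((1 - q) / (1 + q)) ^ (4 / (1 - q ^ 2))
      ≤ (1 + 3 * q) / (2 * (1 - q)) * ((1 - q) / (1 + q)) ^ (4 : ℝ) := by gcongr
    _ = (1 + 3 * q) / (1 + q) ^ 3 * ((1 - q) ^ 3 / (2 * (1 + q))) := by
        norm_cast; field_simp
    _ ≤ 1 * ((1 - q) ^ 3 / (2 * (1 + q))) := by
        gcongr; rw [div_le_one (by positivity)]; nlinarith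
    _ = (1 - q) ^ 3 / (2 * (1 + q)) := one_mul _

lemma eighty_one_mul_sq_le_of_quarter_le {q : ℝ} (hq : 1 / 4 ≤ q) (hq1 : q < 1) :
    81 * (5 * (1 - q) ^ 4 / (43 * (1 + q))) ^ 2 ≤ 7 / 37 * (1 - q ^ 2) := by
  have h7 : (1 - q) ^ 7 ≤ (3 / 4) ^ 7 := pow_le_pow_left₀ (by linarith) (by linarith) 7
  have h3 : (5 / 4) ^ 3 ≤ (1 + q) ^ 3 := pow_le_pow_left₀ (by norm_num) (by linarith) 3
  rw [div_pow, mul_div_assoc', div_le_iff₀ (by positivity)]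
  nlinarith [mul_le_mul_of_nonneg_right h7 (by linarith : (0 : ℝ) ≤ 1 - q),
    mul_le_mul_of_nonneg_right h3 (by linarith : (0 : ℝ) ≤ 1 - q)]

lemma starCond.rpow_sqrt_le {q : ℝ} {n : ℕ} (hq : 0 < q) (hq1 : q < 1) (hn : 9 ≤ n)
    (hstar : starCond q n) : q ^ √n ≤ 5 * (1 - q) ^ 4 / (43 * (1 + q)) := by
  have hs2 : √(n : ℝ) ^ 2 = n := sq_sqrt (Nat.cast_nonneg n)
  have hs3 : 3 ≤ √(n : ℝ) := le_sqrt_of_sq_le (by exact_mod_cast hn)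
  have hmin : 0 ≤ min (160 / (57 * ((n : ℝ) - √n))) (8 / (3 * (n : ℝ) - 7 * √n)) :=
    le_min (div_nonneg (by norm_num) (by nlinarith)) (div_nonneg (by norm_num) (by nlinarith))
  have hfirst : 43 / (10 * (1 - q)) * q ^ √n ≤ (1 - q) ^ 3 / (2 * (1 + q)) :=
    calc 43 / (10 * (1 - q)) * q ^ √n
        ≤ 43 / (10 * (1 - q)) * q ^ √n +
            q / (1 - q) ^ 2 * min (160 / (57 * ((n : ℝ) - √n))) (8 / (3 * (n : ℝ) - 7 * √n)) :=
          le_add_of_nonneg_right (mul_nonneg (by positivity) hmin)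
      _ ≤ _ := hstar
      _ ≤ _ := starCond_rhs_le hq.le hq1
  have hq1' : 0 < 1 - q := by linarith
  rw [le_div_iff₀ (by positivity)]
  rw [div_mul_eq_mul_div, div_le_div_iff₀ (by positivity) (by positivity)] at hfirst
  nlinarith [pow_pos hq1' 4]

theorem star_implies_tail_bound (q : ℝ) (hq : 0 < q) (hq1 : q < 1)
    (n : ℕ) (hn : 9 ≤ n) (hstar : starCond q n) :
    q ^ n / (1 - q ^ (2 * n)) ≤ 7 * q ^ Real.sqrt n / (37 * (n : ℝ) ^ 2) := by
  have hs : (3 : ℝ) ≤ √n := le_sqrt_of_sq_le (by exact_mod_cast hn)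
  rcases lt_or_ge q (1 / 4) with hsmall | hlarge
  · have hq3 : q ^ 3 ≤ (1 / 4) ^ 3 := pow_le_pow_left₀ hq.le hsmall.le 3
    refine tail_bound_of_rpow_sqrt_le (b := q ^ 3) hq hq1 hn ?_ (by linarith)
      (by nlinarith [pow_pos hq 3, sq_nonneg q])
    exact_mod_cast rpow_le_rpow_of_exponent_ge hq hq1.le hs
  · refine tail_bound_of_rpow_sqrt_le hq hq1 hn (hstar.rpow_sqrt_le hq hq1 hn) ?_
      (eighty_one_mul_sq_le_of_quarter_le hlarge hq1)
    rw [div_le_iff₀ (by positivity)]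
    nlinarith [pow_le_one₀ (n := 4) (by linarith : 0 ≤ 1 - q) (by linarith : 1 - q ≤ 1)]
end
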